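/- For any p > 2 and any τ ≥ 1 − 1/p, there exists a t ∈ (0, 1/2] such that Θ_p(τ; t) > Θ_p(τ; 0). -/

import Mathlib

open Real BigOperators

/-- `Θ_p(τ; s) = ∑_{z ∈ ℤ} exp(-τ |z - s|^p)`. -/
noncomputable def Theta1 (p τ s : ℝ) : ℝ :=
  ∑' z : ℤ, Real.exp (-τ * |(z : ℝ) - s| ^ p)

/-!
Write `g x = exp (-τ * x ^ p)`. Pairing `z` with `-z`, for `0 ≤ t ≤ 1`,
`Θ(t) - Θ(0) = (g t - g 0) + ∑_{n ≥ 1} (g (n - t) + g (n + t) - 2 g n)`.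
Since `τ p ≥ p - 1`, `g'' = τ p x^(p-2) g (τ p x^p - (p - 1))` is nonnegative on `[1, ∞)`, so `g`
is convex there and the terms with `n ≥ 3` are nonnegative. The sum `G t` of the remaining terms
vanishes to first order at `0`, and `G''(0) = g''(0) + 2 g''(1) + 2 g''(2) > 0`: `g''(0) = 0` as
`p > 2`, `g''(1) ≥ 0` (it vanishes when `τ p = p - 1`, which is why `n = 2` is kept), and
`g''(2) > 0`. So `G > 0` just to the right of `0`.
-/

open Set Filter Topology

noncomputable def secondDiff (f : ℝ → ℝ) (x t : ℝ) : ℝ :=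
  f (x - t) + f (x + t) - 2 * f x

lemma ConvexOn.secondDiff_nonneg {s : Set ℝ} {f : ℝ → ℝ} (hf : ConvexOn ℝ s f) {x t : ℝ}
    (h₁ : x - t ∈ s) (h₂ : x + t ∈ s) : 0 ≤ secondDiff f x t := by
  have h := hf.2 h₁ h₂ (by norm_num : (0 : ℝ) ≤ 1 / 2) (by norm_num : (0 : ℝ) ≤ 1 / 2)
    (by norm_num)
  have hx : (1 / 2 : ℝ) • (x - t) + (1 / 2 : ℝ) • (x + t) = x := by simp only [smul_eq_mul]; ring
  rw [hx, smul_eq_mul, smul_eq_mul] at h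
  unfold secondDiff
  linarith

lemma secondDiff_comp_abs {f : ℝ → ℝ} {x t : ℝ} (ht : 0 ≤ t) (htx : t ≤ x) :
    secondDiff (fun y => f |y|) x t = secondDiff f x t := by
  simp only [secondDiff, abs_of_nonneg (sub_nonneg.2 htx), abs_of_nonneg (by linarith : 0 ≤ x + t),
    abs_of_nonneg (ht.trans htx)]

lemma secondDiff_comp_abs_zero (f : ℝ → ℝ) (t : ℝ) :
    secondDiff (fun y => f |y|) 0 t = 2 * (f |t| - f 0) := by
  simp only [secondDiff, zero_sub, zero_add, abs_neg, abs_zero]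
  ring

lemma HasDerivAt.secondDiff {f : ℝ → ℝ} {a b x t : ℝ} (ha : HasDerivAt f a (x - t))
    (hb : HasDerivAt f b (x + t)) : HasDerivAt (secondDiff f x) (b - a) t := by
  show HasDerivAt (fun s => f (x - s) + f (x + s) - 2 * f x) (b - a) t
  simpa only [neg_add_eq_sub] using
    ((ha.comp_const_sub x t).fun_add (hb.comp_const_add x t)).sub_const (2 * f x)

lemma HasDerivAt.comp_const_add_sub_comp_const_sub {f : ℝ → ℝ} {a b x t : ℝ}
    (ha : HasDerivAt f a (x - t)) (hb : HasDerivAt f b (x + t)) :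
    HasDerivAt (fun s => f (x + s) - f (x - s)) (b + a) t := by
  simpa only [sub_neg_eq_add] using
    (hb.comp_const_add x t).fun_sub (ha.comp_const_sub x t)

lemma eventually_nhdsGT_lt_of_deriv_deriv_pos {f : ℝ → ℝ} {x₀ : ℝ} (hf : Differentiable ℝ f)
    (hd : deriv f x₀ = 0) (hdd : 0 < deriv (deriv f) x₀) : ∀ᶠ x in 𝓝[>] x₀, f x₀ < f x := by
  have hpos : ∀ᶠ x in 𝓝[>] x₀, 0 < deriv f x := deriv_pos_right_of_sign_deriv
    (nhdsWithin_le_nhds (eventually_nhdsWithin_sign_eq_of_deriv_pos hdd hd))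
  obtain ⟨u, hu, hsub⟩ := mem_nhdsGT_iff_exists_Ioo_subset.mp hpos
  filter_upwards [Ioo_mem_nhdsGT hu] with x hx
  have hmono : StrictMonoOn f (Icc x₀ x) :=
    strictMonoOn_of_deriv_pos (convex_Icc _ _) hf.continuous.continuousOn fun y hy => by
      rw [interior_Icc] at hy
      exact hsub ⟨hy.1, hy.2.trans hx.2⟩
  exact hmono (left_mem_Icc.2 hx.1.le) (right_mem_Icc.2 hx.1.le) hx.1

/-- `x ^ p` is `Real.rpow`, so this is `exp (-τ |x| ^ p)` only for `0 ≤ x`; the theta series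
evaluates it at `|y|`. -/
noncomputable def expNegMulRpow (p τ x : ℝ) : ℝ := exp (-τ * x ^ p)

noncomputable def expNegMulRpowDeriv (p τ x : ℝ) : ℝ :=
  -(τ * p) * x ^ (p - 1) * expNegMulRpow p τ x

noncomputable def expNegMulRpowDeriv2 (p τ x : ℝ) : ℝ :=
  τ * p * expNegMulRpow p τ x * (τ * p * (x ^ (p - 1) * x ^ (p - 1)) - (p - 1) * x ^ (p - 2))

section expNegMulRpow

variable {p τ : ℝ}

lemma hasDerivAt_expNegMulRpow (hp : 1 ≤ p) (x : ℝ) :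
    HasDerivAt (expNegMulRpow p τ) (expNegMulRpowDeriv p τ x) x := by
  have h := ((hasDerivAt_rpow_const (p := p) (x := x) (Or.inr hp)).const_mul (-τ)).exp
  refine h.congr_deriv ?_
  rw [expNegMulRpowDeriv, expNegMulRpow]
  ring

lemma hasDerivAt_expNegMulRpowDeriv (hp : 2 ≤ p) (x : ℝ) :
    HasDerivAt (expNegMulRpowDeriv p τ) (expNegMulRpowDeriv2 p τ x) x := by
  have h := ((hasDerivAt_rpow_const (p := p - 1) (x := x) (Or.inr (by linarith))).const_mul
    (-(τ * p))).mul (hasDerivAt_expNegMulRpow (τ := τ) (by linarith) x)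
  refine h.congr_deriv ?_
  rw [expNegMulRpowDeriv2, expNegMulRpowDeriv, show p - 1 - 1 = p - 2 by ring]
  ring

lemma expNegMulRpowDeriv_zero (hp : 1 < p) : expNegMulRpowDeriv p τ 0 = 0 := by
  simp [expNegMulRpowDeriv, zero_rpow (sub_pos.2 hp).ne']

lemma expNegMulRpowDeriv2_zero (hp : 2 < p) : expNegMulRpowDeriv2 p τ 0 = 0 := by
  simp [expNegMulRpowDeriv2, zero_rpow (by linarith : p - 1 ≠ 0),
    zero_rpow (by linarith : p - 2 ≠ 0)]

lemma expNegMulRpowDeriv2_eq {x : ℝ} (hx : 0 < x) :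
    expNegMulRpowDeriv2 p τ x =
      τ * p * expNegMulRpow p τ x * x ^ (p - 2) * (τ * p * x ^ p - (p - 1)) := by
  have h : x ^ (p - 1) * x ^ (p - 1) = x ^ (p - 2) * x ^ p := by
    rw [← rpow_add hx, ← rpow_add hx]
    ring_nf
  rw [expNegMulRpowDeriv2, h]
  ring

lemma expNegMulRpowDeriv2_nonneg (hp : 1 ≤ p) (hτ : p - 1 ≤ τ * p) {x : ℝ} (hx : 1 ≤ x) :
    0 ≤ expNegMulRpowDeriv2 p τ x := by
  have hxp : 1 ≤ x ^ p := one_le_rpow hx (by linarith)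
  rw [expNegMulRpowDeriv2_eq (by linarith)]
  have : 0 ≤ τ * p * x ^ p - (p - 1) := by nlinarith
  have : 0 ≤ τ * p := by linarith
  unfold expNegMulRpow
  positivity

lemma expNegMulRpowDeriv2_pos (hp : 1 < p) (hτ : p - 1 ≤ τ * p) {x : ℝ} (hx : 1 < x) :
    0 < expNegMulRpowDeriv2 p τ x := by
  have hxp : 1 < x ^ p := one_lt_rpow hx (by linarith)
  rw [expNegMulRpowDeriv2_eq (by linarith)]
  have : 0 < τ * p * x ^ p - (p - 1) := by nlinarith
  have : 0 < τ * p := by linarith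
  unfold expNegMulRpow
  positivity

lemma convexOn_expNegMulRpow (hp : 2 ≤ p) (hτ : p - 1 ≤ τ * p) :
    ConvexOn ℝ (Ici 1) (expNegMulRpow p τ) := by
  refine convexOn_of_hasDerivWithinAt2_nonneg (convex_Ici 1)
    (fun x _ => (hasDerivAt_expNegMulRpow (by linarith) x).continuousAt.continuousWithinAt)
    (fun x _ => (hasDerivAt_expNegMulRpow (by linarith) x).hasDerivWithinAt)
    (fun x _ => (hasDerivAt_expNegMulRpowDeriv hp x).hasDerivWithinAt) fun x hx => ?_
  rw [interior_Ici] at hx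
  exact expNegMulRpowDeriv2_nonneg (by linarith) hτ (le_of_lt hx)

end expNegMulRpow

section Theta

variable {p τ : ℝ}

lemma sub_one_le_rpow {u : ℝ} (hu : 0 ≤ u) (hp : 1 ≤ p) : u - 1 ≤ u ^ p := by
  rcases le_total u 1 with hu1 | hu1
  · linarith [rpow_nonneg hu p]
  · linarith [self_le_rpow_of_one_le hu1 hp]

lemma summable_exp_neg_mul_abs_int_sub_rpow (hp : 1 ≤ p) (hτ : 0 < τ) (s : ℝ) :
    Summable fun z : ℤ => exp (-τ * |(z : ℝ) - s| ^ p) := by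
  have hgeom : Summable fun z : ℤ => exp (-τ * |(z : ℝ)|) := by
    have h := summable_exp_nat_mul_iff.mpr (neg_neg_of_pos hτ)
    refine Summable.of_nat_of_neg ?_ ?_ <;> simpa [mul_comm] using h
  refine (hgeom.mul_left (exp (τ * (1 + |s|)))).of_nonneg_of_le (fun _ => (exp_pos _).le)
    fun z => ?_
  rw [← exp_add, exp_le_exp]
  have h₁ := sub_one_le_rpow (abs_nonneg ((z : ℝ) - s)) hp
  have h₂ := abs_sub_abs_le_abs_sub (z : ℝ) s
  nlinarith

lemma hasSum_secondDiff_Theta1 (hp : 1 ≤ p) (hτ : 0 < τ) (t : ℝ) :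
    HasSum (fun n : ℕ => secondDiff (fun y => expNegMulRpow p τ |y|) n t)
      (Theta1 p τ t - Theta1 p τ 0 + (expNegMulRpow p τ |t| - expNegMulRpow p τ 0)) := by
  have hsum (s : ℝ) : HasSum (fun n : ℕ => expNegMulRpow p τ |n - s| + expNegMulRpow p τ |n + s|)
      (Theta1 p τ s + expNegMulRpow p τ |s|) := by
    have h := (summable_exp_neg_mul_abs_int_sub_rpow hp hτ s).hasSum.nat_add_neg
    simp only [Int.cast_natCast, Int.cast_neg, Int.cast_zero, zero_sub, ← neg_add', abs_neg] at h
    exact h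
  have h := (hsum t).sub (hsum 0)
  rw [abs_zero, add_sub_add_comm] at h
  refine h.congr_fun fun n => ?_
  rw [secondDiff, sub_zero, add_zero]
  ring

noncomputable def thetaLowerBound (p τ t : ℝ) : ℝ :=
  (expNegMulRpow p τ t - expNegMulRpow p τ 0) + secondDiff (expNegMulRpow p τ) 1 t
    + secondDiff (expNegMulRpow p τ) 2 t

lemma thetaLowerBound_le_Theta1_sub (hp : 2 ≤ p) (hτ : p - 1 ≤ τ * p) {t : ℝ} (ht₀ : 0 ≤ t)
    (ht₁ : t ≤ 1) : thetaLowerBound p τ t ≤ Theta1 p τ t - Theta1 p τ 0 := by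
  have hτ₀ : 0 < τ := by nlinarith
  have hsum := hasSum_secondDiff_Theta1 (by linarith : 1 ≤ p) hτ₀ t
  have htail : ∀ n ∉ Finset.range 3,
      0 ≤ secondDiff (fun y => expNegMulRpow p τ |y|) n t := by
    intro n hn
    have hn3 : (3 : ℝ) ≤ n := by exact_mod_cast (by simpa using hn : 3 ≤ n)
    rw [secondDiff_comp_abs ht₀ (by linarith)]
    exact (convexOn_expNegMulRpow hp hτ).secondDiff_nonneg (mem_Ici.2 (by linarith))
      (mem_Ici.2 (by linarith))
  have h := hsum.summable.sum_le_tsum (Finset.range 3) htail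
  rw [hsum.tsum_eq, Finset.sum_range_succ, Finset.sum_range_succ, Finset.sum_range_one] at h
  simp only [Nat.cast_zero, Nat.cast_one, Nat.cast_ofNat, secondDiff_comp_abs_zero,
    secondDiff_comp_abs ht₀ ht₁, secondDiff_comp_abs ht₀ (by linarith : t ≤ 2),
    abs_of_nonneg ht₀] at h
  rw [thetaLowerBound]
  linarith

lemma thetaLowerBound_zero : thetaLowerBound p τ 0 = 0 := by
  simp only [thetaLowerBound, secondDiff, sub_zero, add_zero]
  ring

lemma eventually_thetaLowerBound_pos (hp : 2 < p) (hτ : p - 1 ≤ τ * p) :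
    ∀ᶠ t in 𝓝[>] 0, 0 < thetaLowerBound p τ t := by
  have hg (x : ℝ) := hasDerivAt_expNegMulRpow (τ := τ) (by linarith : 1 ≤ p) x
  have hg' (x : ℝ) := hasDerivAt_expNegMulRpowDeriv (τ := τ) hp.le x
  set g' := expNegMulRpowDeriv p τ
  set g'' := expNegMulRpowDeriv2 p τ
  set G' : ℝ → ℝ := fun t => g' t + (g' (1 + t) - g' (1 - t)) + (g' (2 + t) - g' (2 - t))
  have hG (t : ℝ) : HasDerivAt (thetaLowerBound p τ) (G' t) t :=
    (((hg t).sub_const _).add ((hg (1 - t)).secondDiff (hg (1 + t)))).add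
      ((hg (2 - t)).secondDiff (hg (2 + t)))
  have hG' : HasDerivAt G' (g'' 0 + 2 * g'' 1 + 2 * g'' 2) 0 := by
    refine (((hg' 0).add ((hg' (1 - 0)).comp_const_add_sub_comp_const_sub (hg' (1 + 0)))).add
      ((hg' (2 - 0)).comp_const_add_sub_comp_const_sub (hg' (2 + 0)))).congr_deriv ?_
    simp only [sub_zero, add_zero]
    ring
  have hderiv : deriv (thetaLowerBound p τ) = G' := funext fun t => (hG t).deriv
  have hG'₀ : G' 0 = 0 := by
    simp only [G', g', add_zero, sub_zero, sub_self, expNegMulRpowDeriv_zero (by linarith : 1 < p)]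
  have hG''₀ : 0 < g'' 0 + 2 * g'' 1 + 2 * g'' 2 := by
    simp only [g'', expNegMulRpowDeriv2_zero hp]
    linarith [expNegMulRpowDeriv2_nonneg (by linarith) hτ le_rfl,
      expNegMulRpowDeriv2_pos (by linarith) hτ one_lt_two]
  simpa only [thetaLowerBound_zero] using eventually_nhdsGT_lt_of_deriv_deriv_pos (x₀ := 0)
    (fun t => (hG t).differentiableAt) (hderiv ▸ hG'₀) (by rwa [hderiv, hG'.deriv])

end Theta

/-- For any `p > 2` and any `τ ≥ 1 − 1/p`, there exists `t ∈ (0, 1/2]` with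
`Θ_p(τ; t) > Θ_p(τ; 0)`. -/
theorem exists_shift_theta_gt (p τ : ℝ) (hp : 2 < p) (hτ : 1 - 1 / p ≤ τ) :
    ∃ t ∈ Set.Ioc (0 : ℝ) (1 / 2), Theta1 p τ 0 < Theta1 p τ t := by
  have hτp : p - 1 ≤ τ * p := by
    have h := mul_le_mul_of_nonneg_right hτ (by linarith : (0 : ℝ) ≤ p)
    rwa [sub_mul, one_mul, one_div, inv_mul_cancel₀ (by linarith)] at h
  obtain ⟨t, hpos, ht⟩ := ((eventually_thetaLowerBound_pos hp hτp).and
    (Ioc_mem_nhdsGT (by norm_num : (0 : ℝ) < 1 / 2))).exists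
  exact ⟨t, ht, by linarith [thetaLowerBound_le_Theta1_sub hp.le hτp ht.1.le (by linarith [ht.2])]⟩
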